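/- Let n = n₁ + n₂ with 1 ≤ n₁ ≤ n₂, and let x^(0) ∈ ℝ^n be the vector equal to 1 on coordinates 1, ..., n₁ and equal to -n₁/n₂ on coordinates n₁+1, ..., n (so Σ x^(0)_i = 0 and its variance is (1/n)Σ (x^(0)_i)² = n₁/n₂). Let x^(K) be obtained from x^(0) by a finite sequence of pairwise convex updates, exactly ν of which involve one index in {1,...,n₁} and one index in {n₁+1,...,n}. If the variance of x^(K) satisfies (1/n)·Σ_{i=1}^n (x^(K)_i)² ≤ (1/e²)·(n₁/n₂), then ν ≥ (1 - √2/e)·n₁/2. -/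

import Mathlib

open scoped BigOperators

/-- A pairwise convex update on a vector `x` with indices `i ≠ j` and coefficient `α`:
`x i` is replaced by `α·x i + (1-α)·x j`, `x j` by `α·x j + (1-α)·x i`, and all other
coordinates are unchanged. -/
def convexUpdate (x : ℕ → ℝ) (i j : ℕ) (α : ℝ) : ℕ → ℝ :=
  fun l =>
    if l = i then α * x i + (1 - α) * x j
    else if l = j then α * x j + (1 - α) * x i
    else x l

/-!
Let `S` be the sum of the first `n₁` coordinates, initially `n₁`. All coordinates stay in the
convex set `[-n₁/n₂, 1] ⊆ [-1, 1]`, so an update changes `S` by at most `2`, and only a cross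
update changes it at all; hence `S_K ≥ n₁ - 2ν`. On the other hand, by Cauchy–Schwarz and the
variance bound, `S_K² ≤ n₁ · Σ x_K² ≤ n₁ · (n₁ + n₂)(n₁/n₂)/e² ≤ 2n₁²/e²`.
-/

open Finset

lemma convexUpdate_mem {x : ℕ → ℝ} {i j : ℕ} {α : ℝ} {s : Set ℕ} {t : Set ℝ} (ht : Convex ℝ t)
    (hx : ∀ l ∈ s, x l ∈ t) (hi : i ∈ s) (hj : j ∈ s) (hα : α ∈ Set.Icc 0 1) :
    ∀ l ∈ s, convexUpdate x i j α l ∈ t := by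
  have combo : ∀ {u v}, u ∈ t → v ∈ t → α * u + (1 - α) * v ∈ t := fun hu hv =>
    ht hu hv hα.1 (sub_nonneg.2 hα.2) (add_sub_cancel α 1)
  intro l hl
  unfold convexUpdate
  split_ifs
  exacts [combo (hx i hi) (hx j hj), combo (hx j hj) (hx i hi), hx l hl]

lemma convexUpdate_sub_self (x : ℕ → ℝ) (i j : ℕ) (α : ℝ) (l : ℕ) :
    convexUpdate x i j α l - x l =
      (if l = i then (1 - α) * (x j - x i) else 0) +
        (if l = j then (1 - α) * (x i - x j) else 0) := by
  unfold convexUpdate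
  split_ifs <;> subst_vars <;> ring

lemma sum_convexUpdate_sub_sum (s : Finset ℕ) (x : ℕ → ℝ) (i j : ℕ) (α : ℝ) :
    ∑ l ∈ s, convexUpdate x i j α l - ∑ l ∈ s, x l =
      (if i ∈ s then (1 - α) * (x j - x i) else 0) +
        (if j ∈ s then (1 - α) * (x i - x j) else 0) := by
  simp_rw [← sum_sub_distrib, convexUpdate_sub_self, sum_add_distrib, sum_ite_eq']

lemma abs_sum_convexUpdate_sub_sum_le {x : ℕ → ℝ} {i j : ℕ} {α c : ℝ} (s : Finset ℕ)
    (hα : α ∈ Set.Icc 0 1) (hgap : |x i - x j| ≤ c) :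
    |∑ l ∈ s, convexUpdate x i j α l - ∑ l ∈ s, x l| ≤
      if (i ∈ s ∧ j ∉ s) ∨ (i ∉ s ∧ j ∈ s) then c else 0 := by
  have hshrink : ∀ d, |(1 - α) * d| ≤ |d| := fun d => by
    rw [abs_mul]
    exact mul_le_of_le_one_left (abs_nonneg d) (abs_le.2 ⟨by linarith [hα.2], by linarith [hα.1]⟩)
  rw [sum_convexUpdate_sub_sum]
  by_cases hi : i ∈ s <;> by_cases hj : j ∈ s <;> simp only [hi, hj, not_true_eq_false,
    not_false_eq_true, and_self, and_true, and_false, or_self, or_false, if_true, if_false,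
    add_zero, zero_add]
  · rw [← mul_add, sub_add_sub_cancel', sub_self, mul_zero, abs_zero]
  · exact (hshrink _).trans (abs_sub_comm (x i) (x j) ▸ hgap)
  · exact (hshrink _).trans hgap
  · rw [abs_zero]

lemma mem_of_convexUpdate_trajectory {s : Set ℕ} {t : Set ℝ} (ht : Convex ℝ t) {K : ℕ}
    {x : ℕ → ℕ → ℝ} {i j : ℕ → ℕ} {α : ℕ → ℝ} (h0 : ∀ l ∈ s, x 0 l ∈ t)
    (hstep : ∀ k < K, i k ∈ s ∧ j k ∈ s ∧ α k ∈ Set.Icc 0 1 ∧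
      x (k + 1) = convexUpdate (x k) (i k) (j k) (α k)) :
    ∀ k ≤ K, ∀ l ∈ s, x k l ∈ t := by
  intro k
  induction k with
  | zero => exact fun _ => h0
  | succ k ih =>
    intro hk
    obtain ⟨hi, hj, hα, hx⟩ := hstep k hk
    rw [hx]
    exact convexUpdate_mem ht (ih (Nat.le_of_succ_le hk)) hi hj hα

lemma abs_sub_le_mul_card_filter {S : ℕ → ℝ} {p : ℕ → Prop} [DecidablePred p] {c : ℝ} {K : ℕ}
    (h : ∀ k < K, |S (k + 1) - S k| ≤ if p k then c else 0) :
    |S K - S 0| ≤ c * #{k ∈ range K | p k} :=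
  calc |S K - S 0| = |∑ k ∈ range K, (S (k + 1) - S k)| := by rw [sum_range_sub]
    _ ≤ ∑ k ∈ range K, |S (k + 1) - S k| := abs_sum_le_sum_abs _ _
    _ ≤ ∑ k ∈ range K, if p k then c else 0 := sum_le_sum fun k hk => h k (mem_range.1 hk)
    _ = c * #{k ∈ range K | p k} := by rw [← sum_filter, sum_const, nsmul_eq_mul, mul_comm]

lemma sq_sum_range_le_of_mean_sq_le {y : ℕ → ℝ} {n₁ n₂ : ℕ} {c : ℝ} (h12 : n₁ ≤ n₂)
    (hc : 0 ≤ c) (h : (∑ l ∈ range (n₁ + n₂), y l ^ 2) / (n₁ + n₂) ≤ c * (n₁ / n₂)) :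
    (∑ l ∈ range n₁, y l) ^ 2 ≤ 2 * c * n₁ ^ 2 := by
  rcases n₁.eq_zero_or_pos with rfl | hn₁
  · simp
  have hn₂ : (0 : ℝ) < n₂ := by exact_mod_cast hn₁.trans_le h12
  have hratio : (n₁ / n₂ : ℝ) * (n₁ + n₂) ≤ 2 * n₁ := by
    rw [div_mul_eq_mul_div, div_le_iff₀ hn₂]
    nlinarith [(Nat.cast_le (α := ℝ)).2 h12]
  calc (∑ l ∈ range n₁, y l) ^ 2 ≤ n₁ * ∑ l ∈ range n₁, y l ^ 2 := by
        simpa using sq_sum_le_card_mul_sum_sq (s := range n₁) (f := y)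
    _ ≤ n₁ * ∑ l ∈ range (n₁ + n₂), y l ^ 2 := by
        gcongr
        omega
    _ ≤ n₁ * (c * (n₁ / n₂) * (n₁ + n₂)) := by
        gcongr
        exact (div_le_iff₀ (by positivity)).1 h
    _ ≤ 2 * c * n₁ ^ 2 := by nlinarith [mul_le_mul_of_nonneg_left hratio hc]

theorem convex_updates_variance_drop_needs_many_cross_updates_general
    (n₁ n₂ K : ℕ) (h12 : n₁ ≤ n₂)
    (x : ℕ → ℕ → ℝ) (i j : ℕ → ℕ) (α : ℕ → ℝ)
    (hx0 : ∀ l < n₁ + n₂, x 0 l = if l < n₁ then (1 : ℝ) else -((n₁ : ℝ) / n₂))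
    (hstep : ∀ k < K, i k < n₁ + n₂ ∧ j k < n₁ + n₂ ∧ i k ≠ j k ∧
      α k ∈ Set.Icc (0 : ℝ) 1 ∧ x (k + 1) = convexUpdate (x k) (i k) (j k) (α k))
    (ν : ℕ)
    (hν : ν = ((Finset.range K).filter
      (fun k => (i k < n₁ ∧ ¬ j k < n₁) ∨ (¬ i k < n₁ ∧ j k < n₁))).card)
    (hvar : (∑ l ∈ Finset.range (n₁ + n₂), (x K l) ^ 2) / (n₁ + n₂) ≤
      (1 / Real.exp 1 ^ 2) * ((n₁ : ℝ) / n₂)) :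
    (ν : ℝ) ≥ (1 - Real.sqrt 2 / Real.exp 1) * n₁ / 2 := by
  set S : ℕ → ℝ := fun k => ∑ l ∈ range n₁, x k l
  have hratio : (n₁ / n₂ : ℝ) ≤ 1 := div_le_one_of_le₀ (by exact_mod_cast h12) (by positivity)
  have hbdd := mem_of_convexUpdate_trajectory (s := Set.Iio (n₁ + n₂))
    (convex_Icc (-(n₁ / n₂ : ℝ)) 1)
    (fun l hl => by
      rw [hx0 l hl]
      split_ifs <;> constructor <;> linarith [show (0 : ℝ) ≤ n₁ / n₂ by positivity])
    (fun k hk => let ⟨hi, hj, _, hα, hx⟩ := hstep k hk; ⟨hi, hj, hα, hx⟩)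
  have hS0 : S 0 = n₁ := by
    have hone : ∀ l ∈ range n₁, x 0 l = 1 := fun l hl => by
      rw [hx0 l (Nat.lt_add_right n₂ (mem_range.1 hl)), if_pos (mem_range.1 hl)]
    simp [S, sum_congr rfl hone]
  have hdrift : |S K - S 0| ≤ 2 * ν := by
    rw [hν]
    refine abs_sub_le_mul_card_filter fun k hk => ?_
    obtain ⟨hi, hj, -, hα, hx⟩ := hstep k hk
    have hxi := hbdd k hk.le _ hi
    have hxj := hbdd k hk.le _ hj
    have hgap : |x k (i k) - x k (j k)| ≤ 2 :=
      abs_sub_le_iff.2 ⟨by linarith [hxi.2, hxj.1], by linarith [hxi.1, hxj.2]⟩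
    simpa only [mem_range, ← hx] using abs_sum_convexUpdate_sub_sum_le (range n₁) hα hgap
  have hSK : |S K| ≤ Real.sqrt 2 * n₁ / Real.exp 1 := by
    refine abs_le_of_sq_le_sq ?_ (by positivity)
    rw [div_pow, mul_pow, Real.sq_sqrt zero_le_two]
    exact (sq_sum_range_le_of_mean_sq_le h12 (by positivity) hvar).trans_eq (by ring)
  rw [ge_iff_le, sub_mul, div_mul_eq_mul_div]
  linarith [abs_le.1 hdrift, abs_le.1 hSK]

/-- Start from the vector that is `1` on the first `n₁` coordinates and
`-n₁/n₂` on the remaining `n₂` coordinates (`1 ≤ n₁ ≤ n₂`), which has zero sum and variance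
`n₁/n₂`. If after a finite sequence of pairwise convex updates, of which exactly `ν` are
cross updates, the variance has dropped to at most `(1/e²)·(n₁/n₂)`, then
`ν ≥ (1 - √2/e)·n₁/2`. -/
theorem convex_updates_variance_drop_needs_many_cross_updates
    (n₁ n₂ K : ℕ) (h1 : 1 ≤ n₁) (h12 : n₁ ≤ n₂)
    (x : ℕ → ℕ → ℝ) (i j : ℕ → ℕ) (α : ℕ → ℝ)
    (hx0 : ∀ l < n₁ + n₂, x 0 l = if l < n₁ then (1 : ℝ) else -((n₁ : ℝ) / n₂))
    (hstep : ∀ k < K, i k < n₁ + n₂ ∧ j k < n₁ + n₂ ∧ i k ≠ j k ∧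
      α k ∈ Set.Icc (0 : ℝ) 1 ∧ x (k + 1) = convexUpdate (x k) (i k) (j k) (α k))
    (ν : ℕ)
    (hν : ν = ((Finset.range K).filter
      (fun k => (i k < n₁ ∧ ¬ j k < n₁) ∨ (¬ i k < n₁ ∧ j k < n₁))).card)
    (hvar : (∑ l ∈ Finset.range (n₁ + n₂), (x K l) ^ 2) / (n₁ + n₂) ≤
      (1 / Real.exp 1 ^ 2) * ((n₁ : ℝ) / n₂)) :
    (ν : ℝ) ≥ (1 - Real.sqrt 2 / Real.exp 1) * n₁ / 2 :=
  convex_updates_variance_drop_needs_many_cross_updates_general n₁ n₂ K h12 x i j α hx0 hstep ν hν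
    hvar
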